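/- arXiv:2010.12987 — 9 statements merged into one kernel-verified Lean document; each statement's English description precedes it below -/
import Mathlib

section
/- For every positive integer n and every k ≥ 0, T^k(n) = (3^(Σ_{i=1}^k x_i) · n + Σ_{i=1}^k x_i · 2^{i-1} · 3^{Σ_{λ=i+1}^k x_λ}) / 2^k, where x_i = T^{i-1}(n) mod 2. -/
/-! Since `2 T(m) = 3^(m mod 2) m + m mod 2`, the sequence `a_k = T^k(n)` satisfies the affine
recursion `2 a_{k+1} = 3^{x_{k+1}} a_k + x_{k+1}`; unrolling it gives the formula. -/

def T (n : ℕ) : ℕ := if n % 2 = 0 then n / 2 else (3 * n + 1) / 2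

open Finset

lemma two_mul_T (m : ℕ) : 2 * T m = 3 ^ (m % 2) * m + m % 2 := by
  unfold T
  rcases Nat.mod_two_eq_zero_or_one m with h | h <;> simp [h] <;> omega

lemma sum_Icc_succ_mul_three_pow (x : ℕ → ℕ) (k : ℕ) :
    ∑ i ∈ Icc 1 (k + 1), x i * 2 ^ (i - 1) * 3 ^ (∑ l ∈ Icc (i + 1) (k + 1), x l) =
      3 ^ x (k + 1) * ∑ i ∈ Icc 1 k, x i * 2 ^ (i - 1) * 3 ^ (∑ l ∈ Icc (i + 1) k, x l) +
        x (k + 1) * 2 ^ k := by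
  rw [sum_Icc_succ_top (by omega), Icc_eq_empty_of_lt (Nat.lt_succ_self (k + 1)), sum_empty, mul_sum]
  congr 1
  · refine sum_congr rfl fun i hi => ?_
    rw [sum_Icc_succ_top (by simp at hi; omega)]
    ring
  · simp

lemma two_pow_mul_eq_of_two_mul_succ (a x : ℕ → ℕ)
    (ha : ∀ k, 2 * a (k + 1) = 3 ^ x (k + 1) * a k + x (k + 1)) (k : ℕ) :
    2 ^ k * a k =
      3 ^ (∑ i ∈ Icc 1 k, x i) * a 0 +
        ∑ i ∈ Icc 1 k, x i * 2 ^ (i - 1) * 3 ^ (∑ l ∈ Icc (i + 1) k, x l) := by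
  induction k with
  | zero => simp
  | succ k ih =>
    calc 2 ^ (k + 1) * a (k + 1) = 3 ^ x (k + 1) * (2 ^ k * a k) + x (k + 1) * 2 ^ k := by
          rw [pow_succ, mul_assoc, ha]; ring
      _ = _ := by
          rw [ih, sum_Icc_succ_mul_three_pow, sum_Icc_succ_top (by omega), pow_add]
          ring

theorem stmt_0_general (n : ℕ) (k : ℕ)
    (x : ℕ → ℕ) (hx : ∀ i, x i = T^[i - 1] n % 2) :
    2 ^ k * T^[k] n =
      3 ^ (∑ i ∈ Finset.Icc 1 k, x i) * n +
        ∑ i ∈ Finset.Icc 1 k, x i * 2 ^ (i - 1) * 3 ^ (∑ l ∈ Finset.Icc (i + 1) k, x l) := by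
  refine two_pow_mul_eq_of_two_mul_succ (fun j => T^[j] n) x (fun j => ?_) k
  rw [hx, Nat.add_sub_cancel, Function.iterate_succ_apply', two_mul_T]

theorem stmt_0 (n : ℕ) (hn : 1 ≤ n) (k : ℕ)
    (x : ℕ → ℕ) (hx : ∀ i, x i = T^[i - 1] n % 2) :
    2 ^ k * T^[k] n =
      3 ^ (∑ i ∈ Finset.Icc 1 k, x i) * n +
        ∑ i ∈ Finset.Icc 1 k, x i * 2 ^ (i - 1) * 3 ^ (∑ l ∈ Finset.Icc (i + 1) k, x l) :=
  stmt_0_general n k x hx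
end

section
/- For all positive integers k and n, T^{k-1}(n + 2^{k-1}) and T^{k-1}(n) have opposite parities; that is, x_{n+2^{k-1},k} = 1 + x_{n,k} mod 2, where x_{n,k} = T^{k-1}(n) mod 2. -/
lemma T_add_two_mul (n a : ℕ) :
    T (n + 2 * a) = T n + (if n % 2 = 0 then a else 3 * a) := by
  unfold T
  split_ifs <;> omega

lemma exists_odd_iterate_T_add_two_pow_mul (j : ℕ) :
    ∀ {m : ℕ}, Odd m → ∀ n, ∃ m', Odd m' ∧ T^[j] (n + 2 ^ j * m) = T^[j] n + m' := by
  induction j with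
  | zero => exact fun {m} hm n => ⟨m, hm, by simp⟩
  | succ j ih =>
    intro m hm n
    have hstep : T (n + 2 ^ (j + 1) * m) =
        T n + 2 ^ j * (if n % 2 = 0 then m else 3 * m) := by
      rw [pow_succ', mul_assoc, T_add_two_mul, mul_ite, ← mul_left_comm]
    have hodd : Odd (if n % 2 = 0 then m else 3 * m) := by
      split_ifs
      exacts [hm, (by decide : Odd 3).mul hm]
    obtain ⟨m', hm', h⟩ := ih hodd (T n)
    exact ⟨m', hm', by rw [Function.iterate_succ_apply, Function.iterate_succ_apply, hstep, h]⟩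

theorem stmt_1_general (k n : ℕ) :
    T^[k - 1] (n + 2 ^ (k - 1)) % 2 = (1 + T^[k - 1] n % 2) % 2 := by
  obtain ⟨m, ⟨c, rfl⟩, h⟩ := exists_odd_iterate_T_add_two_pow_mul (k - 1) odd_one n
  rw [mul_one] at h
  rw [h]
  omega

theorem stmt_1 (k n : ℕ) (hk : 1 ≤ k) (hn : 1 ≤ n) :
    T^[k - 1] (n + 2 ^ (k - 1)) % 2 = (1 + T^[k - 1] n % 2) % 2 :=
  stmt_1_general k n
end

section
/- For every positive integer k, the sequence n ↦ T^{k-1}(n) mod 2 is periodic in n with period 2^k; that is, T^{k-1}(n + 2^k) ≡ T^{k-1}(n) (mod 2) for all n ≥ 1. -/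
lemma T_add_two_mul_s2 (m b : ℕ) : T (m + 2 * b) = T m + 3 ^ (m % 2) * b := by
  unfold T
  rcases Nat.mod_two_eq_zero_or_one m with hm | hm
  · rw [if_pos (by omega), if_pos hm, hm]
    omega
  · rw [if_neg (by omega), if_neg (by omega), hm]
    omega

lemma iterate_T_add_two_pow_mul (j : ℕ) :
    ∀ n a : ℕ, ∃ e, T^[j] (n + 2 ^ j * a) = T^[j] n + 3 ^ e * a := by
  induction j with
  | zero => exact fun n a => ⟨0, by simp⟩
  | succ j ih =>
    intro n a
    obtain ⟨e, he⟩ := ih (T n) (3 ^ (n % 2) * a)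
    refine ⟨e + n % 2, ?_⟩
    have hstep : T (n + 2 ^ (j + 1) * a) = T n + 2 ^ j * (3 ^ (n % 2) * a) := by
      rw [pow_succ, mul_comm _ 2, mul_assoc, T_add_two_mul_s2]
      ring
    rw [Function.iterate_succ_apply, Function.iterate_succ_apply, hstep, he]
    ring

theorem stmt_2_general (k : ℕ) (hk : 1 ≤ k) (n : ℕ) :
    T^[k - 1] (n + 2 ^ k) % 2 = T^[k - 1] n % 2 := by
  obtain ⟨e, he⟩ := iterate_T_add_two_pow_mul (k - 1) n 2
  rw [← pow_succ, Nat.sub_add_cancel hk] at he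
  rw [he]
  omega

theorem stmt_2 (k : ℕ) (hk : 1 ≤ k) (n : ℕ) (hn : 1 ≤ n) :
    T^[k - 1] (n + 2 ^ k) % 2 = T^[k - 1] n % 2 :=
  stmt_2_general k hk n
end

section
/- For every positive integer k, the map sending n ∈ {1, 2, ..., 2^k} to its parity vector (T^0(n) mod 2, T^1(n) mod 2, ..., T^{k-1}(n) mod 2) is a bijection onto (ℤ/2)^k. -/
/-!
Since `2 * T n` is `n` or `3 * n + 1` according to the parity of `n`, and `3` is invertible
modulo powers of two, the parity of `n` together with `T n mod 2^j` determines `n mod 2^(j+1)`.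
By induction, the first `k` parities of the orbit of `n` determine `n mod 2^k`, so the parity
vector map is injective on `{1, …, 2^k}`, a set of the same size `2^k` as `(ℤ/2)^k`.
-/

lemma two_mul_T_of_even {n : ℕ} (hn : n % 2 = 0) : 2 * T n = n := by
  simp only [T, hn, if_true]
  omega

lemma two_mul_T_of_odd {n : ℕ} (hn : n % 2 = 1) : 2 * T n = 3 * n + 1 := by
  simp only [T, hn, one_ne_zero, if_false]
  omega

lemma modEq_two_pow_succ_of_T_modEq {m n j : ℕ} (hpar : m % 2 = n % 2)
    (h : T m ≡ T n [MOD 2 ^ j]) : m ≡ n [MOD 2 ^ (j + 1)] := by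
  have h2 : 2 * T m ≡ 2 * T n [MOD 2 ^ (j + 1)] := by
    rw [pow_succ']
    exact h.mul_left' 2
  rcases Nat.mod_two_eq_zero_or_one m with hm | hm
  · rwa [two_mul_T_of_even hm, two_mul_T_of_even (hpar ▸ hm)] at h2
  · rw [two_mul_T_of_odd hm, two_mul_T_of_odd (hpar ▸ hm)] at h2
    have hcop : Nat.Coprime (2 ^ (j + 1)) 3 := Nat.Coprime.pow_left _ (by norm_num)
    exact Nat.ModEq.cancel_left_of_coprime hcop (Nat.ModEq.add_right_cancel' 1 h2)

lemma modEq_two_pow_of_parity_iterate_eq (j : ℕ) {m n : ℕ}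
    (h : ∀ i < j, T^[i] m % 2 = T^[i] n % 2) : m ≡ n [MOD 2 ^ j] := by
  induction j generalizing m n with
  | zero => exact Nat.modEq_one
  | succ j ih =>
    refine modEq_two_pow_succ_of_T_modEq (h 0 j.succ_pos) (ih fun i hi => ?_)
    simpa only [Function.iterate_succ_apply] using h (i + 1) (by omega)

theorem stmt_3_general (k : ℕ) :
    Function.Bijective
      (fun n : Fin (2 ^ k) => fun i : Fin k => ((T^[(i : ℕ)] ((n : ℕ) + 1) : ℕ) : ZMod 2)) := by
  rw [Fintype.bijective_iff_injective_and_card]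
  refine ⟨fun m n hmn => Fin.ext ?_, by simp [ZMod.card]⟩
  have hpar : ∀ i < k, T^[i] ((m : ℕ) + 1) % 2 = T^[i] ((n : ℕ) + 1) % 2 := fun i hi =>
    (ZMod.natCast_eq_natCast_iff' _ _ 2).mp (congrFun hmn ⟨i, hi⟩)
  exact ((modEq_two_pow_of_parity_iterate_eq k hpar).add_right_cancel' 1).eq_of_lt_of_lt m.2 n.2

theorem stmt_3 (k : ℕ) (hk : 1 ≤ k) :
    Function.Bijective
      (fun n : Fin (2 ^ k) => fun i : Fin k => ((T^[(i : ℕ)] ((n : ℕ) + 1) : ℕ) : ZMod 2)) :=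
  stmt_3_general k
end

section
/- Let k be a positive integer and write n = 2^k · p + υ with 0 ≤ υ < 2^k and υ ≥ 1. Then T^k(n) = 3^{d} · p + T^k(υ), where d = Σ_{i=1}^k (T^{i-1}(υ) mod 2). -/
lemma T_two_mul_add (m v : ℕ) : T (2 * m + v) = 3 ^ (v % 2) * m + T v := by
  rcases Nat.mod_two_eq_zero_or_one v with h | h
  · have hm : (2 * m + v) % 2 = 0 := by omega
    simp only [T, h, hm, if_true]
    omega
  · have hm : (2 * m + v) % 2 ≠ 0 := by omega
    simp only [T, h, hm, if_false, one_ne_zero]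
    omega

lemma iterate_T_two_pow_mul_add (k p v : ℕ) :
    T^[k] (2 ^ k * p + v) = 3 ^ (∑ i ∈ Finset.range k, T^[i] v % 2) * p + T^[k] v := by
  induction k generalizing p v with
  | zero => simp
  | succ k ih =>
    have hstep : T (2 ^ (k + 1) * p + v) = 2 ^ k * (3 ^ (v % 2) * p) + T v := by
      rw [pow_succ', mul_assoc, T_two_mul_add]
      ring
    rw [Function.iterate_succ_apply, hstep, ih, Finset.sum_range_succ']
    simp only [Function.iterate_succ_apply, Function.iterate_zero_apply]
    ring

theorem stmt_5_general (k : ℕ) (p υ : ℕ) :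
    T^[k] (2 ^ k * p + υ) =
      3 ^ (∑ i ∈ Finset.range k, T^[i] υ % 2) * p + T^[k] υ :=
  iterate_T_two_pow_mul_add k p υ

theorem stmt_5 (k : ℕ) (hk : 1 ≤ k) (p υ : ℕ) (hυ1 : 1 ≤ υ) (hυ2 : υ < 2 ^ k) :
    T^[k] (2 ^ k * p + υ) =
      3 ^ (∑ i ∈ Finset.range k, T^[i] υ % 2) * p + T^[k] υ :=
  stmt_5_general k p υ
end

section
/- For every positive integer k and every υ with 1 ≤ υ < 2^k, it holds that T^k(υ) < 3^{d_{υ,k}}, where d_{υ,k} = Σ_{i=1}^k (T^{i-1}(υ) mod 2). -/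
theorem T_lt_three_pow_mul_of_lt_two_mul {n m : ℕ} (h : n < 2 * m) :
    T n < 3 ^ (n % 2) * m := by
  unfold T
  rcases Nat.mod_two_eq_zero_or_one n with hn | hn <;>
    simp only [hn, ↓reduceIte, one_ne_zero, pow_zero, pow_one, one_mul] <;> omega

theorem iterate_T_lt_three_pow_mul_of_lt_two_pow_mul (k : ℕ) {n c : ℕ} (h : n < 2 ^ k * c) :
    T^[k] n < 3 ^ (∑ i ∈ Finset.range k, T^[i] n % 2) * c := by
  induction k generalizing n c with
  | zero => simpa using h
  | succ k ih =>
    have hT : T n < 2 ^ k * (3 ^ (n % 2) * c) := by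
      rw [mul_left_comm]
      exact T_lt_three_pow_mul_of_lt_two_mul (by rwa [← mul_assoc, ← pow_succ'])
    simpa only [Finset.sum_range_succ', Function.iterate_succ_apply, Function.iterate_zero_apply,
      pow_add, mul_assoc] using ih hT

theorem stmt_6_general (k : ℕ) (υ : ℕ) (hυ2 : υ < 2 ^ k) :
    T^[k] υ < 3 ^ (∑ i ∈ Finset.range k, T^[i] υ % 2) := by
  simpa using iterate_T_lt_three_pow_mul_of_lt_two_pow_mul k (c := 1) (by simpa using hυ2)

theorem stmt_6 (k : ℕ) (hk : 1 ≤ k) (υ : ℕ) (hυ1 : 1 ≤ υ) (hυ2 : υ < 2 ^ k) :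
    T^[k] υ < 3 ^ (∑ i ∈ Finset.range k, T^[i] υ % 2) :=
  stmt_6_general k υ hυ2
end

section
/- For every positive integer n, if p ≡ 2^n - 1 (mod 2^n) (i.e., p = 2^n·λ + 2^n - 1 for some λ ≥ 0), then T^k(p) is odd for every k = 0, 1, ..., n-1, and T^k(p) ≡ 2 (mod 3) for every k = 1, 2, ..., n. -/
lemma T_two_mul_sub_one {m : ℕ} (hm : 0 < m) : T (2 * m - 1) = 3 * m - 1 := by
  rw [T, if_neg (by omega)]
  omega

lemma iterate_T_two_pow_mul_sub_one (k : ℕ) {a : ℕ} (ha : 0 < a) :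
    T^[k] (2 ^ k * a - 1) = 3 ^ k * a - 1 := by
  induction k generalizing a with
  | zero => simp
  | succ k ih =>
    have hstep : T (2 ^ (k + 1) * a - 1) = 2 ^ k * (3 * a) - 1 := by
      rw [pow_succ', mul_assoc, T_two_mul_sub_one (by positivity), mul_left_comm]
    rw [Function.iterate_succ_apply, hstep, ih (by positivity), pow_succ, mul_assoc]

lemma iterate_T_two_pow_mul_succ_sub_one {n k : ℕ} (hk : k ≤ n) (a : ℕ) :
    T^[k] (2 ^ n * (a + 1) - 1) = 3 ^ k * (2 ^ (n - k) * (a + 1)) - 1 := by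
  rw [← iterate_T_two_pow_mul_sub_one k (by positivity), ← mul_assoc, ← pow_add,
    Nat.add_sub_cancel' hk]

lemma sub_one_mod_of_dvd {d x : ℕ} (hd : d ∣ x) (hx : 0 < x) : (x - 1) % d = d - 1 := by
  obtain ⟨c, rfl⟩ := hd
  obtain ⟨d, rfl⟩ : ∃ d', d = d' + 1 := ⟨d - 1, by grind⟩
  obtain ⟨c, rfl⟩ : ∃ c', c = c' + 1 := ⟨c - 1, by grind⟩
  rw [show (d + 1) * (c + 1) - 1 = (d + 1) * c + d by ring_nf; omega, Nat.mul_add_mod,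
    Nat.mod_eq_of_lt (by omega), Nat.add_sub_cancel]

theorem stmt_7 (n : ℕ) (hn : 1 ≤ n) (p lam : ℕ) (hp : p = 2 ^ n * lam + 2 ^ n - 1) :
    (∀ k, k ≤ n - 1 → T^[k] p % 2 = 1) ∧
    (∀ k, 1 ≤ k → k ≤ n → T^[k] p % 3 = 2) := by
  have hp' : p = 2 ^ n * (lam + 1) - 1 := by rw [hp, mul_add_one]
  subst hp'
  constructor
  · intro k hk
    rw [iterate_T_two_pow_mul_succ_sub_one (by omega)]
    exact sub_one_mod_of_dvd (((dvd_pow_self 2 (by omega)).mul_right _).mul_left _)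
      (by positivity)
  · intro k hk1 hkn
    rw [iterate_T_two_pow_mul_succ_sub_one hkn]
    exact sub_one_mod_of_dvd ((dvd_pow_self 3 (by omega)).mul_right _) (by positivity)
end

section
/- For every n ≥ 0 and every positive integer m, |{i ∈ ℕ⁺ : T^n(i) = m}| ≤ F_n, where (F_n) is the Fibonacci-type sequence with F_0 = 1, F_1 = 2, F_{n+2} = F_{n+1} + F_n. -/
def F : ℕ → ℕ
  | 0 => 1
  | 1 => 2
  | n + 2 => F (n + 1) + F n

/-!
Every `j` with `T j = m` is `2 * m` or, when `m ≡ 2 [MOD 3]`, also `(2 * m - 1) / 3`, so the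
fibre of `T^[n + 1]` over `m` is covered by at most two fibres of `T^[n]`. In the branching case
`2 * m ≡ 1 [MOD 3]`, so `2 * m` has the single preimage `4 * m`; by induction the fibre of
`T^[n + 2]` over `m` then has at most `F n + F (n + 1)` elements.
-/

open Set

theorem setOf_iterate_succ_subset {α : Type*} (f : α → α) (p : α → Prop) (n : ℕ)
    {m a b : α} (h : ∀ j, f j = m → j = a ∨ j = b) :
    {i | p i ∧ f^[n + 1] i = m} ⊆ {i | p i ∧ f^[n] i = a} ∪ {i | p i ∧ f^[n] i = b} := by
  rintro i ⟨hp, hi⟩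
  rw [Function.iterate_succ_apply'] at hi
  exact (h _ hi).imp (fun ha => ⟨hp, ha⟩) (fun hb => ⟨hp, hb⟩)

theorem T_eq_iff (j m : ℕ) : T j = m ↔ j = 2 * m ∨ (m % 3 = 2 ∧ j = (2 * m - 1) / 3) := by
  unfold T
  split <;> omega

theorem F_le_F_succ : ∀ n, F n ≤ F (n + 1)
  | 0 => by decide
  | _ + 1 => Nat.le_add_right _ _

section Fibre

variable (n m : ℕ)

theorem encard_fibre_succ_le :
    {i | 1 ≤ i ∧ T^[n + 1] i = m}.encard ≤ {i | 1 ≤ i ∧ T^[n] i = 2 * m}.encard +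
      {i | 1 ≤ i ∧ T^[n] i = (2 * m - 1) / 3}.encard :=
  (encard_le_encard <| setOf_iterate_succ_subset T (1 ≤ ·) n fun j hj => by
    rw [T_eq_iff] at hj; omega).trans (encard_union_le _ _)

theorem encard_fibre_succ_le_of_mod_ne (hm : m % 3 ≠ 2) :
    {i | 1 ≤ i ∧ T^[n + 1] i = m}.encard ≤ {i | 1 ≤ i ∧ T^[n] i = 2 * m}.encard := by
  refine encard_le_encard ((setOf_iterate_succ_subset T (1 ≤ ·) n fun j hj => ?_).trans
    (union_self _).subset)
  rw [T_eq_iff] at hj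
  omega

theorem encard_fibre_zero_le_one : {i | 1 ≤ i ∧ T^[0] i = m}.encard ≤ 1 :=
  encard_le_one_iff.2 fun _ _ ha hb => ha.2.trans hb.2.symm

end Fibre

theorem encard_fibre_le (n : ℕ) : ∀ m, {i | 1 ≤ i ∧ T^[n] i = m}.encard ≤ F n := by
  induction n using Nat.strong_induction_on with
  | _ n ih =>
  intro m
  match n with
  | 0 => simpa [F] using encard_fibre_zero_le_one m
  | n + 1 =>
    by_cases hm : m % 3 = 2
    · refine (encard_fibre_succ_le n m).trans ?_
      match n with
      | 0 =>
        calc _ ≤ (1 : ℕ∞) + 1 :=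
              add_le_add (encard_fibre_zero_le_one _) (encard_fibre_zero_le_one _)
          _ = F 1 := rfl
      | n + 1 =>
        have hdouble : {i | 1 ≤ i ∧ T^[n + 1] i = 2 * m}.encard ≤ F n :=
          (encard_fibre_succ_le_of_mod_ne n (2 * m) (by omega)).trans (ih n (by omega) _)
        calc _ ≤ (F n : ℕ∞) + F (n + 1) := add_le_add hdouble (ih (n + 1) (by omega) _)
          _ = F (n + 2) := by rw [F]; push_cast; ring
    · calc _ ≤ {i | 1 ≤ i ∧ T^[n] i = 2 * m}.encard := encard_fibre_succ_le_of_mod_ne n m hm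
        _ ≤ F n := ih n (by omega) _
        _ ≤ F (n + 1) := by exact_mod_cast F_le_F_succ n

theorem stmt_13_general (n m : ℕ) :
    {i : ℕ | 1 ≤ i ∧ T^[n] i = m}.ncard ≤ F n :=
  (encard_le_coe_iff_finite_ncard_le.1 (encard_fibre_le n m)).2

theorem stmt_13 (n m : ℕ) (hm : 1 ≤ m) :
    {i : ℕ | 1 ≤ i ∧ T^[n] i = m}.ncard ≤ F n :=
  stmt_13_general n m
end

section
/- For positive integers n and k, T^k(n) ∈ {1,2} if and only if the sequence ((-1)^{T^m(n)})_{m ≥ k} is periodic with period 2 (i.e., (-1)^{T^{m+2}(n)} = (-1)^{T^m(n)} and (-1)^{T^{m+1}(n)} = -(-1)^{T^m(n)} for all m ≥ k). -/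
lemma neg_one_pow_eq_neg_neg_one_pow_iff (x y : ℕ) :
    (-1 : ℤ) ^ x = -(-1 : ℤ) ^ y ↔ x % 2 ≠ y % 2 := by
  rw [neg_one_pow_eq_pow_mod_two, neg_one_pow_eq_pow_mod_two (n := y)]
  rcases Nat.mod_two_eq_zero_or_one x with hx | hx <;>
    rcases Nat.mod_two_eq_zero_or_one y with hy | hy <;> simp [hx, hy]

lemma mapsTo_T_one_two : Set.MapsTo T {1, 2} {1, 2} := by
  rintro a (rfl | rfl) <;> simp [T]

lemma T_T_of_mem_one_two {a : ℕ} (ha : a ∈ ({1, 2} : Set ℕ)) : T (T a) = a := by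
  rcases ha with rfl | rfl <;> rfl

lemma T_mod_two_ne_of_mem_one_two {a : ℕ} (ha : a ∈ ({1, 2} : Set ℕ)) : T a % 2 ≠ a % 2 := by
  rcases ha with rfl | rfl <;> decide

lemma mem_one_two_or_T_T_lt {a : ℕ} (h₁ : T a % 2 ≠ a % 2) (h₂ : T (T a) % 2 ≠ T a % 2) :
    a ∈ ({1, 2} : Set ℕ) ∨ T (T a) < a := by
  simp only [T, Set.mem_insert_iff, Set.mem_singleton_iff] at h₁ h₂ ⊢
  split_ifs at h₁ h₂ ⊢ <;> omega

lemma mem_one_two_of_T_mem {a : ℕ} (h : T a % 2 ≠ a % 2) (hT : T a ∈ ({1, 2} : Set ℕ)) :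
    a ∈ ({1, 2} : Set ℕ) := by
  simp only [T, Set.mem_insert_iff, Set.mem_singleton_iff] at h hT ⊢
  split_ifs at h hT <;> omega

lemma mem_one_two_of_parity_alternates (a : ℕ)
    (h : ∀ j, T (T^[j] a) % 2 ≠ T^[j] a % 2) : a ∈ ({1, 2} : Set ℕ) := by
  induction a using Nat.strong_induction_on with
  | _ a ih =>
    rcases mem_one_two_or_T_T_lt (h 0) (h 1) with ha | hlt
    · exact ha
    · have hTT : T (T a) ∈ ({1, 2} : Set ℕ) := ih _ hlt fun j => by
        simpa only [← Function.iterate_succ_apply] using h (j + 2)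
      exact mem_one_two_of_T_mem (h 0) (mem_one_two_of_T_mem (h 1) hTT)

theorem stmt_16_general (n k : ℕ) :
    (T^[k] n = 1 ∨ T^[k] n = 2) ↔
      (∀ m, k ≤ m →
        (-1 : ℤ) ^ T^[m + 2] n = (-1 : ℤ) ^ T^[m] n ∧
        (-1 : ℤ) ^ T^[m + 1] n = -(-1 : ℤ) ^ T^[m] n) := by
  change T^[k] n ∈ ({1, 2} : Set ℕ) ↔ _
  simp only [neg_one_pow_eq_neg_neg_one_pow_iff, Function.iterate_succ_apply']
  constructor
  · intro hk m hm
    obtain ⟨j, rfl⟩ := Nat.exists_eq_add_of_le hm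
    have hmem : T^[k + j] n ∈ ({1, 2} : Set ℕ) := by
      rw [add_comm, Function.iterate_add_apply]
      exact mapsTo_T_one_two.iterate j hk
    exact ⟨by rw [T_T_of_mem_one_two hmem], T_mod_two_ne_of_mem_one_two hmem⟩
  · intro H
    refine mem_one_two_of_parity_alternates _ fun j => ?_
    simpa only [← Function.iterate_add_apply, add_comm j k] using
      (H (k + j) (Nat.le_add_right k j)).2

theorem stmt_16 (n k : ℕ) (hn : 1 ≤ n) (hk : 1 ≤ k) :
    (T^[k] n = 1 ∨ T^[k] n = 2) ↔
      (∀ m, k ≤ m →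
        (-1 : ℤ) ^ T^[m + 2] n = (-1 : ℤ) ^ T^[m] n ∧
        (-1 : ℤ) ^ T^[m + 1] n = -(-1 : ℤ) ^ T^[m] n) :=
  stmt_16_general n k
end
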